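/- arXiv:1710.06148 — 2 statements merged into one kernel-verified Lean document; each statement's English description precedes it below -/
import Mathlib

section
/- Knot insertion preserves the B-spline curve: inserting a knot ξ̄ ∈ [ξ_k, ξ_{k+1}) into the knot vector and defining new control points B̄_i = α_i B_i + (1−α_i) B_{i−1} with α_i = 1 for i ≤ k−p, α_i = (ξ̄−ξ_i)/(ξ_{i+p}−ξ_i) for k−p+1 ≤ i ≤ k, and α_i = 0 for i ≥ k+1, yields a curve ∑_{i=1}^{n+1} N̄_{i,p}(x) B̄_i identical to the original curve ∑_{i=1}^{n} N_{i,p}(x) B_i. -/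
/-- Cox–de Boor recursion for B-spline basis functions (zero-denominator fractions
are zero, matching Lean's division by zero convention). -/
noncomputable def coxDeBoor (ξ : ℕ → ℝ) : ℕ → ℕ → ℝ → ℝ
  | i, 0, x => if ξ i ≤ x ∧ x < ξ (i + 1) then 1 else 0
  | i, p + 1, x =>
      (x - ξ i) / (ξ (i + p + 1) - ξ i) * coxDeBoor ξ i p x
        + (ξ (i + p + 2) - x) / (ξ (i + p + 2) - ξ (i + 1)) * coxDeBoor ξ (i + 1) p x

/-- The knot-insertion coefficients. -/
noncomputable def insCoef (ξ : ℕ → ℝ) (k : ℕ) (t : ℝ) (p i : ℕ) : ℝ :=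
  if i + p ≤ k then 1 else if i ≤ k then (t - ξ i) / (ξ (i + p) - ξ i) else 0

lemma insCoef_one {ξ : ℕ → ℝ} {k : ℕ} {t : ℝ} {p i : ℕ} (h : i + p ≤ k) :
    insCoef ξ k t p i = 1 := if_pos h

lemma insCoef_mid {ξ : ℕ → ℝ} {k : ℕ} {t : ℝ} {p i : ℕ} (h1 : k < i + p) (h2 : i ≤ k) :
    insCoef ξ k t p i = (t - ξ i) / (ξ (i + p) - ξ i) := by
  unfold insCoef; rw [if_neg (by omega), if_pos h2]

lemma insCoef_zero {ξ : ℕ → ℝ} {k : ℕ} {t : ℝ} {p i : ℕ} (h : k < i) :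
    insCoef ξ k t p i = 0 := by
  unfold insCoef; rw [if_neg (by omega), if_neg (by omega)]

/-- Local support of B-spline basis functions. -/
lemma coxDeBoor_support (ξ : ℕ → ℝ) (hmono : Monotone ξ) :
    ∀ p i x, coxDeBoor ξ i p x ≠ 0 → ξ i ≤ x ∧ x < ξ (i + p + 1) := by
  intro p
  induction p with
  | zero =>
    intro i x h
    rw [coxDeBoor] at h
    by_cases hc : ξ i ≤ x ∧ x < ξ (i + 1)
    · simpa using hc
    · rw [if_neg hc] at h; exact absurd rfl h
  | succ p IH =>
    intro i x h
    rw [coxDeBoor] at h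
    have h' : (x - ξ i) / (ξ (i + p + 1) - ξ i) * coxDeBoor ξ i p x ≠ 0 ∨
        (ξ (i + p + 2) - x) / (ξ (i + p + 2) - ξ (i + 1)) * coxDeBoor ξ (i + 1) p x ≠ 0 := by
      by_contra hc
      push_neg at hc
      rw [hc.1, hc.2, add_zero] at h
      exact h rfl
    rcases h' with h' | h'
    · have hN := right_ne_zero_of_mul h'
      obtain ⟨h1, h2⟩ := IH i x hN
      refine ⟨h1, ?_⟩
      have := hmono (show i + p + 1 ≤ i + (p + 1) + 1 by omega)
      linarith
    · have hN := right_ne_zero_of_mul h'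
      obtain ⟨h1, h2⟩ := IH (i + 1) x hN
      have ha := hmono (show i ≤ i + 1 by omega)
      have hb := hmono (show i + 1 + p + 1 ≤ i + (p + 1) + 1 by omega)
      exact ⟨le_trans ha h1, lt_of_lt_of_le h2 hb⟩

/-- Boehm's knot insertion formula for B-spline basis functions. -/
lemma coxDeBoor_insert (ξ : ℕ → ℝ) (hmono : Monotone ξ) (k : ℕ) (t : ℝ)
    (ht1 : ξ k ≤ t) (ht2 : t < ξ (k + 1)) (ξ' : ℕ → ℝ)
    (hξ' : ∀ j, ξ' j = if j ≤ k then ξ j else if j = k + 1 then t else ξ (j - 1)) :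
    ∀ p i x, coxDeBoor ξ i p x
      = insCoef ξ k t p i * coxDeBoor ξ' i p x
        + (1 - insCoef ξ k t p (i + 1)) * coxDeBoor ξ' (i + 1) p x := by
  have hlow : ∀ j, j ≤ k → ξ' j = ξ j := fun j hj => by rw [hξ' j, if_pos hj]
  have hmid : ξ' (k + 1) = t := by rw [hξ' (k + 1), if_neg (by omega), if_pos rfl]
  have hhigh : ∀ j, k + 2 ≤ j → ξ' j = ξ (j - 1) := fun j hj => by
    rw [hξ' j, if_neg (by omega), if_neg (by omega)]
  have hmono' : Monotone ξ' := by
    apply monotone_nat_of_le_succ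
    intro m
    by_cases h1 : m + 1 ≤ k
    · rw [hlow m (by omega), hlow (m + 1) h1]; exact hmono (by omega)
    · by_cases h2 : m = k
      · subst h2; rw [hlow m le_rfl, hmid]; exact ht1
      · by_cases h3 : m = k + 1
        · subst h3
          rw [hmid, hhigh (k + 1 + 1) (by omega)]
          have : k + 1 + 1 - 1 = k + 1 := by omega
          rw [this]; exact le_of_lt ht2
        · rw [hhigh m (by omega), hhigh (m + 1) (by omega)]
          exact hmono (by omega)
  have hpos : ∀ a b : ℕ, a ≤ k → k < b → 0 < ξ b - ξ a := by
    intro a b ha hb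
    have h1 : ξ a ≤ ξ k := hmono ha
    have h2 : ξ (k + 1) ≤ ξ b := hmono hb
    linarith
  intro p
  induction p with
  | zero =>
    intro i x
    by_cases h1 : i + 1 ≤ k
    · rw [insCoef_one (show i + 0 ≤ k by omega), insCoef_one (show i + 1 + 0 ≤ k by omega)]
      simp only [coxDeBoor]
      rw [hlow i (by omega), hlow (i + 1) h1]
      ring
    · by_cases h2 : i = k
      · subst h2
        rw [insCoef_one (show i + 0 ≤ i by omega), insCoef_zero (show i < i + 1 by omega)]
        simp only [coxDeBoor]
        rw [hlow i le_rfl, hmid, show i + 1 + 1 = i + 2 from rfl,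
          hhigh (i + 2) (by omega), show i + 2 - 1 = i + 1 from by omega]
        rcases le_or_gt t x with hx | hx
        · by_cases hy : x < ξ (i + 1)
          · rw [if_pos ⟨by linarith, hy⟩, if_neg (by rintro ⟨_, h⟩; linarith),
              if_pos ⟨hx, hy⟩]
            ring
          · rw [if_neg (by rintro ⟨_, h⟩; exact hy h), if_neg (by rintro ⟨_, h⟩; linarith),
              if_neg (by rintro ⟨_, h⟩; exact hy h)]
            ring
        · by_cases hy : ξ i ≤ x
          · rw [if_pos ⟨hy, by linarith⟩, if_pos ⟨hy, hx⟩,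
              if_neg (by rintro ⟨h, _⟩; linarith)]
            ring
          · rw [if_neg (by rintro ⟨h, _⟩; exact hy h), if_neg (by rintro ⟨h, _⟩; exact hy h),
              if_neg (by rintro ⟨h, _⟩; linarith)]
            ring
      · -- k < i
        rw [insCoef_zero (show k < i by omega), insCoef_zero (show k < i + 1 by omega)]
        simp only [coxDeBoor]
        rw [hhigh (i + 1) (by omega), show i + 1 - 1 = i from by omega,
          hhigh (i + 1 + 1) (by omega), show i + 1 + 1 - 1 = i + 1 from by omega]
        ring
  | succ p IH =>
    intro i x
    simp only [coxDeBoor]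
    rw [IH i x, IH (i + 1) x]
    simp only [show i + 1 + 1 = i + 2 from rfl, show i + 1 + p + 1 = i + p + 2 from by omega,
      show i + 1 + p + 2 = i + p + 3 from by omega]
    set X := coxDeBoor ξ' i p x with hXdef
    set Y := coxDeBoor ξ' (i + 1) p x with hYdef
    set Z := coxDeBoor ξ' (i + 2) p x with hZdef
    have C1 : (x - ξ i) / (ξ (i + p + 1) - ξ i) * (insCoef ξ k t p i * X)
        = insCoef ξ k t (p + 1) i * ((x - ξ' i) / (ξ' (i + p + 1) - ξ' i) * X) := by
      rcases eq_or_ne X 0 with h | h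
      · rw [h]; ring
      · obtain ⟨hs1, hs2⟩ := coxDeBoor_support ξ' hmono' p i x h
        by_cases c1 : i + p + 1 ≤ k
        · rw [insCoef_one (show i + p ≤ k by omega), insCoef_one (show i + (p + 1) ≤ k by omega),
            hlow i (by omega), hlow (i + p + 1) c1]
          ring
        · by_cases c2 : i ≤ k
          · by_cases c3 : i + p ≤ k
            · -- i + p = k
              rw [insCoef_one c3, insCoef_mid (show k < i + (p + 1) by omega) c2]
              simp only [show i + (p + 1) = i + p + 1 from by omega]
              have e : ξ' (i + p + 1) = t := by rw [show i + p + 1 = k + 1 from by omega, hmid]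
              rw [hlow i c2] at hs1
              rw [e] at hs2
              rw [hlow i c2, e]
              have d1 : ξ (i + p + 1) - ξ i ≠ 0 := ne_of_gt (hpos i (i + p + 1) c2 (by omega))
              have d2 : t - ξ i ≠ 0 := ne_of_gt (by linarith)
              field_simp
            · rw [insCoef_mid (by omega) c2, insCoef_mid (show k < i + (p + 1) by omega) c2]
              simp only [show i + (p + 1) = i + p + 1 from by omega]
              have e : ξ' (i + p + 1) = ξ (i + p) := by
                rw [hhigh (i + p + 1) (by omega), show i + p + 1 - 1 = i + p from by omega]
              rw [hlow i c2, e]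
              ring
          · rw [insCoef_zero (by omega), insCoef_zero (by omega)]
            ring
    have C3 : (ξ (i + p + 2) - x) / (ξ (i + p + 2) - ξ (i + 1)) * ((1 - insCoef ξ k t p (i + 2)) * Z)
        = (1 - insCoef ξ k t (p + 1) (i + 1))
            * ((ξ' (i + p + 3) - x) / (ξ' (i + p + 3) - ξ' (i + 2)) * Z) := by
      rcases eq_or_ne Z 0 with h | h
      · rw [h]; ring
      · obtain ⟨hs1, hs2⟩ := coxDeBoor_support ξ' hmono' p (i + 2) x h
        simp only [show i + 2 + p + 1 = i + p + 3 from by omega] at hs2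
        by_cases c1 : i + p + 2 ≤ k
        · rw [insCoef_one (show i + 2 + p ≤ k by omega),
            insCoef_one (show i + 1 + (p + 1) ≤ k by omega)]
          ring
        · by_cases c2 : i + 1 ≤ k
          · rw [insCoef_mid (show k < i + 1 + (p + 1) by omega) c2]
            simp only [show i + 1 + (p + 1) = i + p + 2 from by omega]
            have d : ξ (i + p + 2) - ξ (i + 1) ≠ 0 :=
              ne_of_gt (hpos (i + 1) (i + p + 2) c2 (by omega))
            have e2 : ξ' (i + p + 3) = ξ (i + p + 2) := by
              rw [hhigh (i + p + 3) (by omega), show i + p + 3 - 1 = i + p + 2 from by omega]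
            by_cases c3 : i + 2 ≤ k
            · rw [insCoef_mid (show k < i + 2 + p by omega) c3]
              simp only [show i + 2 + p = i + p + 2 from by omega]
              have e1 : ξ' (i + 2) = ξ (i + 2) := hlow _ c3
              rw [e1, e2]
              have d2 : ξ (i + p + 2) - ξ (i + 2) ≠ 0 :=
                ne_of_gt (hpos (i + 2) (i + p + 2) c3 (by omega))
              field_simp
              ring
            · -- i + 1 = k
              rw [insCoef_zero (show k < i + 2 by omega)]
              have e1 : ξ' (i + 2) = t := by rw [show i + 2 = k + 1 from by omega, hmid]
              rw [e1] at hs1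
              rw [e2] at hs2
              rw [e1, e2]
              have d2 : ξ (i + p + 2) - t ≠ 0 := ne_of_gt (by linarith)
              field_simp
              ring
          · rw [insCoef_zero (show k < i + 2 by omega), insCoef_zero (show k < i + 1 by omega)]
            have e1 : ξ' (i + 2) = ξ (i + 1) := by
              rw [hhigh (i + 2) (by omega), show i + 2 - 1 = i + 1 from by omega]
            have e2 : ξ' (i + p + 3) = ξ (i + p + 2) := by
              rw [hhigh (i + p + 3) (by omega), show i + p + 3 - 1 = i + p + 2 from by omega]
            rw [e1, e2]
            ring
    have C2 : (x - ξ i) / (ξ (i + p + 1) - ξ i) * ((1 - insCoef ξ k t p (i + 1)) * Y)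
          + (ξ (i + p + 2) - x) / (ξ (i + p + 2) - ξ (i + 1)) * (insCoef ξ k t p (i + 1) * Y)
        = insCoef ξ k t (p + 1) i * ((ξ' (i + p + 2) - x) / (ξ' (i + p + 2) - ξ' (i + 1)) * Y)
          + (1 - insCoef ξ k t (p + 1) (i + 1))
              * ((x - ξ' (i + 1)) / (ξ' (i + p + 2) - ξ' (i + 1)) * Y) := by
      rcases eq_or_ne Y 0 with h | h
      · rw [h]; ring
      · obtain ⟨hs1, hs2⟩ := coxDeBoor_support ξ' hmono' p (i + 1) x h
        simp only [show i + 1 + p + 1 = i + p + 2 from by omega] at hs2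
        by_cases c1 : i + p + 1 ≤ k
        · rw [insCoef_one (show i + (p + 1) ≤ k by omega),
            insCoef_one (show i + 1 + p ≤ k by omega)]
          by_cases c2 : i + p + 2 ≤ k
          · rw [insCoef_one (show i + 1 + (p + 1) ≤ k by omega), hlow (i + 1) (by omega),
              hlow (i + p + 2) c2]
            ring
          · -- i + p + 1 = k
            rw [insCoef_mid (show k < i + 1 + (p + 1) by omega) (show i + 1 ≤ k by omega)]
            simp only [show i + 1 + (p + 1) = i + p + 2 from by omega]
            have e1 : ξ' (i + 1) = ξ (i + 1) := hlow _ (by omega)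
            have e2 : ξ' (i + p + 2) = t := by rw [show i + p + 2 = k + 1 from by omega, hmid]
            rw [e1] at hs1
            rw [e2] at hs2
            rw [e1, e2]
            have d : ξ (i + p + 2) - ξ (i + 1) ≠ 0 :=
              ne_of_gt (hpos (i + 1) (i + p + 2) (by omega) (by omega))
            have d2 : t - ξ (i + 1) ≠ 0 := ne_of_gt (by linarith)
            field_simp
            ring
        · by_cases c2 : i ≤ k
          · rw [insCoef_mid (show k < i + (p + 1) by omega) c2]
            simp only [show i + (p + 1) = i + p + 1 from by omega]
            have d1 : ξ (i + p + 1) - ξ i ≠ 0 := ne_of_gt (hpos i (i + p + 1) c2 (by omega))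
            by_cases c3 : i + 1 ≤ k
            · rw [insCoef_mid (show k < i + 1 + p by omega) c3,
                insCoef_mid (show k < i + 1 + (p + 1) by omega) c3]
              simp only [show i + 1 + p = i + p + 1 from by omega,
                show i + 1 + (p + 1) = i + p + 2 from by omega]
              have e1 : ξ' (i + 1) = ξ (i + 1) := hlow _ c3
              have e2 : ξ' (i + p + 2) = ξ (i + p + 1) := by
                rw [hhigh (i + p + 2) (by omega), show i + p + 2 - 1 = i + p + 1 from by omega]
              rw [e1, e2]
              have d2 : ξ (i + p + 1) - ξ (i + 1) ≠ 0 :=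
                ne_of_gt (hpos (i + 1) (i + p + 1) c3 (by omega))
              have d3 : ξ (i + p + 2) - ξ (i + 1) ≠ 0 :=
                ne_of_gt (hpos (i + 1) (i + p + 2) c3 (by omega))
              field_simp
              ring
            · -- i = k
              rw [insCoef_zero (show k < i + 1 by omega), insCoef_zero (show k < i + 1 by omega)]
              have e1 : ξ' (i + 1) = t := by rw [show i + 1 = k + 1 from by omega, hmid]
              have e2 : ξ' (i + p + 2) = ξ (i + p + 1) := by
                rw [hhigh (i + p + 2) (by omega), show i + p + 2 - 1 = i + p + 1 from by omega]
              rw [e1] at hs1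
              rw [e2] at hs2
              rw [e1, e2]
              have d2 : ξ (i + p + 1) - t ≠ 0 := ne_of_gt (by linarith)
              field_simp
              ring
          · rw [insCoef_zero (show k < i by omega), insCoef_zero (show k < i + 1 by omega),
              insCoef_zero (show k < i + 1 by omega)]
            have e1 : ξ' (i + 1) = ξ i := by
              rw [hhigh (i + 1) (by omega), show i + 1 - 1 = i from by omega]
            have e2 : ξ' (i + p + 2) = ξ (i + p + 1) := by
              rw [hhigh (i + p + 2) (by omega), show i + p + 2 - 1 = i + p + 1 from by omega]
            rw [e1, e2]
            ring
    linear_combination C1 + C2 + C3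

/-- Knot insertion preserves the B-spline curve: inserting a knot
ξ̄ ∈ [ξ_k, ξ_{k+1}) and taking the new control points
B̄_i = α_i B_i + (1 − α_i) B_{i−1} (with α_i = 1 for i ≤ k−p,
α_i = (ξ̄ − ξ_i)/(ξ_{i+p} − ξ_i) for k−p+1 ≤ i ≤ k, α_i = 0 for i ≥ k+1)
yields the same curve. -/
theorem bspline_knot_insertion (d n p k : ℕ) (ξ : ℕ → ℝ) (hmono : Monotone ξ)
    (hk1 : p + 1 ≤ k) (hk2 : k ≤ n)
    (t : ℝ) (ht : ξ k ≤ t ∧ t < ξ (k + 1))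
    (B : ℕ → Fin d → ℝ)
    (ξ' : ℕ → ℝ)
    (hξ' : ∀ j, ξ' j = if j ≤ k then ξ j else if j = k + 1 then t else ξ (j - 1))
    (α : ℕ → ℝ)
    (hα : ∀ i, α i = if i + p ≤ k then 1
      else if i ≤ k then (t - ξ i) / (ξ (i + p) - ξ i) else 0)
    (B' : ℕ → Fin d → ℝ)
    (hB' : ∀ i, B' i = α i • B i + (1 - α i) • B (i - 1)) :
    ∀ x : ℝ,
      ∑ i ∈ Finset.Icc 1 (n + 1), coxDeBoor ξ' i p x • B' i
        = ∑ i ∈ Finset.Icc 1 n, coxDeBoor ξ i p x • B i := by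
  intro x
  have key := coxDeBoor_insert ξ hmono k t ht.1 ht.2 ξ' hξ' p
  have hc : ∀ i, α i = insCoef ξ k t p i := by
    intro i; rw [hα i]; rfl
  have hIcc : ∀ (m : ℕ) (f : ℕ → Fin d → ℝ),
      ∑ i ∈ Finset.Icc 1 m, f i = ∑ j ∈ Finset.range m, f (j + 1) := by
    intro m f
    rw [show Finset.Icc 1 m = Finset.Ico 1 (m + 1) from by rw [Finset.Ico_add_one_right_eq_Icc],
      Finset.sum_Ico_eq_sum_range]
    simp [add_comm]
  rw [hIcc, hIcc]
  have hsplit : ∀ j : ℕ, coxDeBoor ξ' (j + 1) p x • B' (j + 1)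
      = (insCoef ξ k t p (j + 1) * coxDeBoor ξ' (j + 1) p x) • B (j + 1)
        + ((1 - insCoef ξ k t p (j + 1)) * coxDeBoor ξ' (j + 1) p x) • B j := by
    intro j
    rw [hB' (j + 1), hc (j + 1), show j + 1 - 1 = j from rfl]
    module
  simp only [hsplit]
  rw [Finset.sum_add_distrib, Finset.sum_range_succ, Finset.sum_range_succ']
  rw [insCoef_zero (show k < n + 1 by omega), insCoef_one (show 0 + 1 + p ≤ k by omega)]
  simp only [zero_mul, sub_self, zero_smul, add_zero]
  rw [← Finset.sum_add_distrib]
  refine Finset.sum_congr rfl fun j _ => ?_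
  rw [key (j + 1) x, add_smul]
end

section
/- In the compliant case, combining the output error identity with the a posteriori bound gives 0 ≤ sᴺ(μ) − s_N^ᴺ(μ) ≤ ‖r(·;μ)‖_{(Xᴺ)'}² / α_LB(μ); in particular the RB output underestimates the truth output. -/
/-- In the compliant case, 0 ≤ sᴺ(μ) − s_N^ᴺ(μ) ≤ ‖r‖² / α_LB; in particular the
reduced basis output underestimates the truth output. -/
theorem compliant_output_error_bound
    {X : Type*} [NormedAddCommGroup X] [InnerProductSpace ℝ X]
    (a : X →ₗ[ℝ] X →ₗ[ℝ] ℝ) (f : X →L[ℝ] ℝ)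
    (hsymm : ∀ v w, a v w = a w v)
    (αLB : ℝ) (hα : 0 < αLB)
    (hcoer : ∀ v, αLB * ‖v‖ ^ 2 ≤ a v v)
    (hcont : ∃ γ, ∀ v w, a v w ≤ γ * ‖v‖ * ‖w‖)
    (S : Submodule ℝ X)
    (u uN : X) (hu : ∀ v, a u v = f v)
    (huN : uN ∈ S) (hgal : ∀ v ∈ S, a uN v = f v)
    (r : X →L[ℝ] ℝ) (hr : ∀ v, r v = f v - a uN v) :
    0 ≤ f u - f uN ∧ f u - f uN ≤ ‖r‖ ^ 2 / αLB := by
  set e := u - uN with he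
  -- output error identity: f u - f uN = a e e
  have horth : a e uN = 0 := by
    simp only [he, map_sub, LinearMap.sub_apply]
    rw [hu uN, hgal uN huN]; ring
  have hkey : f u - f uN = a e e := by
    have h1 : f u - f uN = f e := by simp [he]
    have h2 : f e = a u e := (hu e).symm
    have h3 : a u e = a e e + a uN e := by
      have : a u e = a (e + uN) e := by simp [he]
      simpa [map_add, LinearMap.add_apply] using this
    have h4 : a uN e = 0 := by rw [hsymm uN e]; exact horth
    rw [h1, h2, h3, h4]; ring
  have hlow : (0:ℝ) ≤ a e e :=
    le_trans (by positivity) (hcoer e)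
  refine ⟨by rw [hkey]; exact hlow, ?_⟩
  have hre : r e = a e e := by
    rw [hr e]
    have : f e = a u e := (hu e).symm
    rw [this]
    simp only [he, map_sub, LinearMap.sub_apply]
    rw [hsymm uN u]
  have hb : a e e ≤ ‖r‖ * ‖e‖ := by
    rw [← hre]
    calc r e ≤ |r e| := le_abs_self _
    _ ≤ ‖r‖ * ‖e‖ := r.le_opNorm e
  have hc := hcoer e
  have hnr : (0:ℝ) ≤ ‖r‖ := norm_nonneg _
  have hne : (0:ℝ) ≤ ‖e‖ := norm_nonneg _
  rw [hkey, le_div_iff₀ hα]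
  nlinarith [sq_nonneg (‖r‖ - αLB * ‖e‖), sq_nonneg ‖e‖]
end
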